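/- Let X and Y be independent stationary processes over A = {0,...,n−1} and let Z be the running-key ciphertext Z_i = (X_i + Y_i) mod n. Then the conditional entropy rate of the plaintext given the ciphertext satisfies h(X|Z) ≥ h(X) + h(Y) − log₂ n. -/

import Mathlib

open MeasureTheory Filter Real

section Defs

variable {Ω : Type*} [MeasurableSpace Ω]

/-- The left shift on one-sided infinite sequences. -/
def seqShift {α : Type*} (s : ℕ → α) : ℕ → α := fun i => s (i + 1)

/-- The law of a process `X = X_1 X_2 ...`, i.e. the distribution of the random
sequence `(X_1, X_2, ...)` as a measure on `ℕ → α`. -/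
noncomputable def procLaw {α : Type*} [MeasurableSpace α] (μ : Measure Ω)
    (X : ℕ → Ω → α) : Measure (ℕ → α) := μ.map fun ω i => X i ω

/-- A process is stationary if its law is invariant under the left shift. -/
def Stationary {α : Type*} [MeasurableSpace α] (μ : Measure Ω) (X : ℕ → Ω → α) : Prop :=
  MeasurePreserving seqShift (procLaw μ X) (procLaw μ X)

/-- A process is stationary ergodic if the left shift is an ergodic (in particular
measure-preserving) transformation of its law. -/
def StationaryErgodic {α : Type*} [MeasurableSpace α] (μ : Measure Ω) (X : ℕ → Ω → α) : Prop :=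
  Ergodic seqShift (procLaw μ X)

/-- `P_X(u) = P(X_1 ... X_t = u)`, the probability that the first `t` letters of the
process equal the word `u`. -/
noncomputable def blockProb {α : Type*} (μ : Measure Ω) (X : ℕ → Ω → α) (t : ℕ)
    (u : Fin t → α) : ℝ :=
  (μ {ω | ∀ i : Fin t, X i ω = u i}).toReal

/-- The `m`-order Shannon entropy
`h_m(X) = -(1/(m+1)) ∑_{u ∈ A^{m+1}} P_X(u) log₂ P_X(u)`. -/
noncomputable def blockEnt {α : Type*} [Fintype α] (μ : Measure Ω) (X : ℕ → Ω → α)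
    (m : ℕ) : ℝ :=
  -(1 / ((m : ℝ) + 1)) *
    ∑ u : Fin (m + 1) → α, blockProb μ X (m + 1) u * logb 2 (blockProb μ X (m + 1) u)

/-- The `m`-order conditional Shannon entropy `h_m(X|Z) = h_m(X,Z) - h_m(Z)`,
where `(X,Z)` is the pair process. -/
noncomputable def condBlockEnt {α : Type*} [Fintype α] (μ : Measure Ω)
    (X Z : ℕ → Ω → α) (m : ℕ) : ℝ :=
  blockEnt μ (fun i ω => (X i ω, Z i ω)) m - blockEnt μ Z m

/-- The conditional probability `P(X_1...X_t = x | Z_1...Z_t = z)`. -/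
noncomputable def condProb {α : Type*} (μ : Measure Ω) (X Z : ℕ → Ω → α) (t : ℕ)
    (x z : Fin t → α) : ℝ :=
  (μ {ω | (∀ i : Fin t, X i ω = x i) ∧ ∀ i : Fin t, Z i ω = z i}).toReal /
    (μ {ω | ∀ i : Fin t, Z i ω = z i}).toReal

/-- The conditional probability `P(X_1...X_t ∈ Ψ | Z_1...Z_t = z)` of a set `Ψ` of words. -/
noncomputable def condProbSet {α : Type*} (μ : Measure Ω) (X Z : ℕ → Ω → α) (t : ℕ)
    (Ψ : Set (Fin t → α)) (z : Fin t → α) : ℝ :=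
  (μ {ω | (fun i : Fin t => X i ω) ∈ Ψ ∧ ∀ i : Fin t, Z i ω = z i}).toReal /
    (μ {ω | ∀ i : Fin t, Z i ω = z i}).toReal

/-- The set `Ψ(Z) = {x ∈ A^t : |-(1/t) log₂ P(X_1...X_t = x | Z_1...Z_t) - h(X|Z)| < ε/2}`
of high-probability decipherings, where `hXZ` denotes the conditional entropy rate `h(X|Z)`. -/
def Psi {α : Type*} (μ : Measure Ω) (X Z : ℕ → Ω → α) (hXZ ε : ℝ) (t : ℕ)
    (z : Fin t → α) : Set (Fin t → α) :=
  {x | |-(1 / (t : ℝ)) * logb 2 (condProb μ X Z t x z) - hXZ| < ε / 2}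

/-- The Shannon entropy `H(U) = -∑_u P(U = u) log₂ P(U = u)` of a finite-valued
random variable. -/
noncomputable def rvEnt {β : Type*} [Fintype β] (μ : Measure Ω) (U : Ω → β) : ℝ :=
  -∑ b : β, (μ (U ⁻¹' {b})).toReal * logb 2 (μ (U ⁻¹' {b})).toReal

/-- The conditional Shannon entropy `H(U|V) = H(U,V) - H(V)`. -/
noncomputable def rvCondEnt {β γ : Type*} [Fintype β] [Fintype γ] (μ : Measure Ω)
    (U : Ω → β) (V : Ω → γ) : ℝ :=
  rvEnt μ (fun ω => (U ω, V ω)) - rvEnt μ V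

/-- The binary entropy function `H_b(p) = -p log₂ p - (1-p) log₂ (1-p)`. -/
noncomputable def binEnt (p : ℝ) : ℝ := -(p * logb 2 p) - (1 - p) * logb 2 (1 - p)

end Defs

/-!
Replacing the key by the ciphertext is a letterwise bijection `(x, y) ↦ (x, x + y)` of the pair
process, so `h_m(X,Z) = h_m(X,Y)`, and this equals `h_m(X) + h_m(Y)` by independence. Since
`Z` takes `n` values, `h_m(Z) ≤ log₂ n`, whence `h_m(X|Z) ≥ h_m(X) + h_m(Y) - log₂ n` for every
`m`; let `m → ∞`.
-/

open ProbabilityTheory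

theorem Real.sum_negMulLog_le_log_card {ι : Type*} [Fintype ι] [Nonempty ι] {p : ι → ℝ}
    (h0 : ∀ i, 0 ≤ p i) (h1 : ∑ i, p i = 1) :
    ∑ i, negMulLog (p i) ≤ log (Fintype.card ι) := by
  set N : ℝ := (Fintype.card ι : ℝ)
  have hN : 0 < N := by positivity
  have jensen : ∑ i, N⁻¹ • negMulLog (p i) ≤ negMulLog (∑ i, N⁻¹ • p i) :=
    concaveOn_negMulLog.le_map_sum (fun _ _ => by positivity)
      (by simp [N, Finset.card_univ]) (fun i _ => h0 i)
  rw [← Finset.smul_sum, ← Finset.smul_sum, h1, smul_eq_mul, smul_eq_mul, mul_one,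
    negMulLog, log_inv] at jensen
  nlinarith [mul_le_mul_of_nonneg_left jensen hN.le, mul_inv_cancel₀ hN.ne']

theorem Real.sum_sum_negMulLog_mul {ι κ : Type*} [Fintype ι] [Fintype κ] {p : ι → ℝ}
    {q : κ → ℝ} (hp : ∑ i, p i = 1) (hq : ∑ j, q j = 1) :
    ∑ i, ∑ j, negMulLog (p i * q j) = ∑ i, negMulLog (p i) + ∑ j, negMulLog (q j) := by
  simp only [negMulLog_mul, Finset.sum_add_distrib, ← Finset.mul_sum, ← Finset.sum_mul, hp, hq,
    one_mul]

section BlockEntropy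

variable {Ω α β : Type*} [MeasurableSpace Ω] (μ : Measure Ω)

noncomputable def wordEnt [Fintype α] (X : ℕ → Ω → α) (t : ℕ) : ℝ :=
  ∑ u : Fin t → α, negMulLog (blockProb μ X t u)

theorem blockEnt_eq_wordEnt [Fintype α] (X : ℕ → Ω → α) (m : ℕ) :
    blockEnt μ X m = wordEnt μ X (m + 1) / (((m : ℝ) + 1) * log 2) := by
  simp only [blockEnt, wordEnt, negMulLog, logb, Finset.sum_div, Finset.mul_sum]
  refine Finset.sum_congr rfl fun u _ => ?_
  field_simp

theorem sum_blockProb [Fintype α] [MeasurableSpace α] [MeasurableSingletonClass α]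
    [IsProbabilityMeasure μ] {X : ℕ → Ω → α} (hX : ∀ i, Measurable (X i)) (t : ℕ) :
    ∑ u : Fin t → α, blockProb μ X t u = 1 := by
  have hword : Measurable fun ω (i : Fin t) => X i ω := measurable_pi_lambda _ fun i => hX i
  have hfiber (u : Fin t → α) :
      {ω | ∀ i : Fin t, X i ω = u i} = (fun ω (i : Fin t) => X i ω) ⁻¹' {u} := by
    ext ω
    simp [funext_iff]
  simp only [blockProb, hfiber, ← measureReal_def]
  rw [sum_measureReal_preimage_singleton _ fun u _ => hword (measurableSet_singleton u)]
  simp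

theorem wordEnt_le_log_card [Fintype α] [Nonempty α] [MeasurableSpace α]
    [MeasurableSingletonClass α] [IsProbabilityMeasure μ] {X : ℕ → Ω → α}
    (hX : ∀ i, Measurable (X i)) (t : ℕ) :
    wordEnt μ X t ≤ t * log (Fintype.card α) := by
  calc wordEnt μ X t ≤ log (Fintype.card (Fin t → α)) :=
        sum_negMulLog_le_log_card (fun _ => ENNReal.toReal_nonneg) (sum_blockProb μ hX t)
    _ = t * log (Fintype.card α) := by simp [log_pow]

theorem blockEnt_le_logb_card [Fintype α] [Nonempty α] [MeasurableSpace α]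
    [MeasurableSingletonClass α] [IsProbabilityMeasure μ] {X : ℕ → Ω → α}
    (hX : ∀ i, Measurable (X i)) (m : ℕ) :
    blockEnt μ X m ≤ logb 2 (Fintype.card α) := by
  rw [blockEnt_eq_wordEnt, div_le_iff₀ (by positivity), logb]
  have := wordEnt_le_log_card μ hX (m + 1)
  field_simp
  push_cast at this
  linarith

theorem blockProb_map_equiv (e : α ≃ β) (X : ℕ → Ω → α) (t : ℕ) (u : Fin t → β) :
    blockProb μ (fun i ω => e (X i ω)) t u = blockProb μ X t (e.symm ∘ u) := by
  simp only [blockProb, Function.comp_apply, ← Equiv.eq_symm_apply]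

theorem wordEnt_map_equiv [Fintype α] [Fintype β] (e : α ≃ β) (X : ℕ → Ω → α) (t : ℕ) :
    wordEnt μ (fun i ω => e (X i ω)) t = wordEnt μ X t := by
  simp only [wordEnt, blockProb_map_equiv]
  exact Equiv.sum_comp (Equiv.piCongrRight fun _ => e.symm) fun u => negMulLog (blockProb μ X t u)

theorem blockEnt_map_equiv [Fintype α] [Fintype β] (e : α ≃ β) (X : ℕ → Ω → α) (m : ℕ) :
    blockEnt μ (fun i ω => e (X i ω)) m = blockEnt μ X m := by
  simp only [blockEnt_eq_wordEnt, wordEnt_map_equiv]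

theorem measurableSet_setOf_forall_fin_eq [MeasurableSpace α] [MeasurableSingletonClass α]
    {t : ℕ} (u : Fin t → α) : MeasurableSet {s : ℕ → α | ∀ i : Fin t, s i = u i} := by
  simp only [Set.ofPred_forall]
  exact .iInter fun i => measurable_pi_apply _ (measurableSet_singleton _)

theorem blockProb_pair_eq_mul [MeasurableSpace α] [MeasurableSpace β]
    [MeasurableSingletonClass α] [MeasurableSingletonClass β] {X : ℕ → Ω → α}
    {Y : ℕ → Ω → β} (hXY : IndepFun (fun ω i => X i ω) (fun ω i => Y i ω) μ) (t : ℕ)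
    (x : Fin t → α) (y : Fin t → β) :
    blockProb μ (fun i ω => (X i ω, Y i ω)) t (fun i => (x i, y i)) =
      blockProb μ X t x * blockProb μ Y t y := by
  have := hXY.measure_inter_preimage_eq_mul _ _
    (measurableSet_setOf_forall_fin_eq x) (measurableSet_setOf_forall_fin_eq y)
  simp only [blockProb, Prod.mk.injEq, forall_and]
  rw [← ENNReal.toReal_mul]
  exact congrArg ENNReal.toReal this

theorem wordEnt_pair_eq_add [Fintype α] [Fintype β] [MeasurableSpace α] [MeasurableSpace β]
    [MeasurableSingletonClass α] [MeasurableSingletonClass β] [IsProbabilityMeasure μ]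
    {X : ℕ → Ω → α} {Y : ℕ → Ω → β} (hX : ∀ i, Measurable (X i)) (hY : ∀ i, Measurable (Y i))
    (hXY : IndepFun (fun ω i => X i ω) (fun ω i => Y i ω) μ) (t : ℕ) :
    wordEnt μ (fun i ω => (X i ω, Y i ω)) t = wordEnt μ X t + wordEnt μ Y t := by
  rw [wordEnt, ← Equiv.sum_comp (Equiv.arrowProdEquivProdArrow _ _ _).symm,
    Fintype.sum_prod_type]
  simp only [Equiv.arrowProdEquivProdArrow_symm_apply, blockProb_pair_eq_mul μ hXY]
  exact sum_sum_negMulLog_mul (sum_blockProb μ hX t) (sum_blockProb μ hY t)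

theorem blockEnt_pair_eq_add [Fintype α] [Fintype β] [MeasurableSpace α] [MeasurableSpace β]
    [MeasurableSingletonClass α] [MeasurableSingletonClass β] [IsProbabilityMeasure μ]
    {X : ℕ → Ω → α} {Y : ℕ → Ω → β} (hX : ∀ i, Measurable (X i)) (hY : ∀ i, Measurable (Y i))
    (hXY : IndepFun (fun ω i => X i ω) (fun ω i => Y i ω) μ) (m : ℕ) :
    blockEnt μ (fun i ω => (X i ω, Y i ω)) m = blockEnt μ X m + blockEnt μ Y m := by
  simp only [blockEnt_eq_wordEnt, wordEnt_pair_eq_add μ hX hY hXY, add_div]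

end BlockEntropy

theorem cond_entropy_rate_plaintext_given_ciphertext_general
    {Ω : Type*} [MeasurableSpace Ω] (μ : Measure Ω) [IsProbabilityMeasure μ]
    {n : ℕ} [NeZero n]
    (X Y Z : ℕ → Ω → ZMod n)
    (hXmeas : ∀ i, Measurable (X i)) (hYmeas : ∀ i, Measurable (Y i))
    (hindep : ProbabilityTheory.IndepFun (fun ω i => X i ω) (fun ω i => Y i ω) μ)
    (hZdef : ∀ i ω, Z i ω = X i ω + Y i ω)
    (hX hY hXgZ : ℝ)
    (hXrate : Tendsto (fun m => blockEnt μ X m) atTop (nhds hX))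
    (hYrate : Tendsto (fun m => blockEnt μ Y m) atTop (nhds hY))
    (hXgZrate : Tendsto (fun m => condBlockEnt μ X Z m) atTop (nhds hXgZ)) :
    hXgZ ≥ hX + hY - logb 2 n := by
  have hZmeas (i : ℕ) : Measurable (Z i) := by
    rw [show Z i = X i + Y i from funext (hZdef i)]
    exact (hXmeas i).add (hYmeas i)
  have hshear : (fun i ω => (X i ω, Z i ω)) =
      fun i ω => Equiv.prodShear (.refl _) Equiv.addLeft (X i ω, Y i ω) := by
    simp only [hZdef]
    rfl
  have hblock (m : ℕ) : blockEnt μ X m + blockEnt μ Y m - logb 2 n ≤ condBlockEnt μ X Z m := by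
    have hpair : blockEnt μ (fun i ω => (X i ω, Z i ω)) m = blockEnt μ X m + blockEnt μ Y m := by
      rw [hshear, blockEnt_map_equiv, blockEnt_pair_eq_add μ hXmeas hYmeas hindep]
    have hZ : blockEnt μ Z m ≤ logb 2 n := by
      simpa only [ZMod.card] using blockEnt_le_logb_card μ hZmeas m
    rw [condBlockEnt, hpair]
    linarith
  exact le_of_tendsto_of_tendsto' ((hXrate.add hYrate).sub_const _) hXgZrate hblock

/-- For the running-key cipher with independent stationary plaintext `X`
and key `Y` over an `n`-letter alphabet, `h(X|Z) ≥ h(X) + h(Y) - log₂ n`. -/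
theorem cond_entropy_rate_plaintext_given_ciphertext
    {Ω : Type*} [MeasurableSpace Ω] (μ : Measure Ω) [IsProbabilityMeasure μ]
    {n : ℕ} [NeZero n] (hn : 2 ≤ n)
    (X Y Z : ℕ → Ω → ZMod n)
    (hXmeas : ∀ i, Measurable (X i)) (hYmeas : ∀ i, Measurable (Y i))
    (hXstat : Stationary μ X) (hYstat : Stationary μ Y)
    (hindep : ProbabilityTheory.IndepFun (fun ω i => X i ω) (fun ω i => Y i ω) μ)
    (hZdef : ∀ i ω, Z i ω = X i ω + Y i ω)
    (hX hY hXgZ : ℝ)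
    (hXrate : Tendsto (fun m => blockEnt μ X m) atTop (nhds hX))
    (hYrate : Tendsto (fun m => blockEnt μ Y m) atTop (nhds hY))
    (hXgZrate : Tendsto (fun m => condBlockEnt μ X Z m) atTop (nhds hXgZ)) :
    hXgZ ≥ hX + hY - logb 2 n :=
  cond_entropy_rate_plaintext_given_ciphertext_general μ X Y Z hXmeas hYmeas hindep hZdef hX hY hXgZ
    hXrate hYrate hXgZrate
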